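/- arXiv:0803.2961 — 5 statements merged into one kernel-verified Lean document; each statement's English description precedes it below -/
import Mathlib

section
/- Let K and L be finite fields with |K| = q and |L| = q³, with K a subfield of L (L an algebra over K), and let ω be a primitive element of L, i.e. ω generates the multiplicative group Lˣ (equivalently, the order of ω in Lˣ is q³ − 1). Then the image of ω in the quotient group Lˣ / (image of Kˣ under the algebra map) has order q² + q + 1. (In Singer's identification of PG(2,q) with Lˣ mod Kˣ, this says that a Singer cycle has order q² + q + 1.) -/
/-!
Since `ω` generates the cyclic group `Lˣ`, its image generates `Lˣ ⧸ Kˣ`, so its order is the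
index of `Kˣ` in `Lˣ`, namely `(q³ - 1) / (q - 1) = q² + q + 1`.
-/

open Subgroup QuotientGroup

theorem forall_mem_zpowers_of_orderOf_eq_card {G : Type*} [Group G] [Finite G] {g : G}
    (hg : orderOf g = Nat.card G) (x : G) : x ∈ zpowers g := by
  rw [(zpowers g).eq_top_of_card_eq (by rw [Nat.card_zpowers, hg])]
  exact mem_top x

theorem orderOf_mk_eq_index {G : Type*} [Group G] {H : Subgroup G} [H.Normal] {g : G}
    (hg : ∀ x, x ∈ zpowers g) : orderOf (g : G ⧸ H) = H.index :=
  orderOf_eq_card_of_forall_mem_zpowers fun y => by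
    obtain ⟨x, rfl⟩ := mk_surjective y
    obtain ⟨n, rfl⟩ := hg x
    exact ⟨n, by simp⟩

theorem index_range_units_map_algebraMap_mul (K L : Type*) [Field K] [Field L] [Algebra K L] :
    (Units.map (algebraMap K L).toMonoidHom).range.index * (Nat.card K - 1) =
      Nat.card L - 1 := by
  rw [← Nat.card_units, ← Nat.card_units,
    Nat.card_congr (MonoidHom.ofInjective (Units.map_injective (algebraMap K L).injective)).toEquiv,
    index_mul_card]

theorem Nat.sq_add_add_one_mul_sub_one (q : ℕ) : (q ^ 2 + q + 1) * (q - 1) = q ^ 3 - 1 := by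
  rcases Nat.eq_zero_or_pos q with rfl | hq
  · rfl
  · zify [hq, Nat.one_le_pow 3 q hq]
    ring

/-- If `K ⊆ L` are finite fields with `|K| = q`, `|L| = q³`, and `ω` is a
primitive element of `L` (i.e. `ω` has order `q³ − 1` in `Lˣ`), then the image of `ω` in the
quotient group `Lˣ / Kˣ` has order `q² + q + 1` (Singer). -/
theorem singer_cycle_order (q : ℕ) (K L : Type*) [Field K] [Field L] [Fintype K] [Fintype L]
    [Algebra K L] (hK : Fintype.card K = q) (hL : Fintype.card L = q ^ 3)
    (ω : Lˣ) (hω : orderOf ω = q ^ 3 - 1) :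
    orderOf (QuotientGroup.mk ω :
      Lˣ ⧸ (Units.map (algebraMap K L).toMonoidHom).range) = q ^ 2 + q + 1 := by
  have hq : 2 ≤ q := hK ▸ Fintype.one_lt_card
  have hgen := forall_mem_zpowers_of_orderOf_eq_card
    (by rw [hω, Nat.card_units, Nat.card_eq_fintype_card, hL])
  have hindex := index_range_units_map_algebraMap_mul K L
  rw [Nat.card_eq_fintype_card, Nat.card_eq_fintype_card, hK, hL,
    ← Nat.sq_add_add_one_mul_sub_one] at hindex
  rw [orderOf_mk_eq_index hgen]
  exact Nat.eq_of_mul_eq_mul_right (by omega) hindex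
end

section
/- Let K and L be finite fields with |K| = q and |L| = q³, K a subfield of L, and let ω be a primitive element of L (the order of ω in Lˣ is q³ − 1). Write the minimal polynomial of ω over K as p(x) = x³ − a x² − b x − c with a, b, c ∈ K. Then the companion-type matrix C = [[0,1,0],[0,0,1],[c,b,a]] over K is invertible, and the image of C in PGL(3, K) = GL(3, K)/Z (the quotient of GL(3,K) by its center) has order exactly q² + q + 1. (C induces a Singer cycle of PG(2, q).) -/
/-!
In the power basis `1, ω, ω²` of `L` over `K`, multiplication by `ω` has matrix `Cᵀ`, so `Cⁿ` is
scalar exactly when `ωⁿ ∈ K`. Hence the order of `C` modulo scalars is the order of `ω` in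
`Lˣ / Kˣ`, and since `ω` generates the cyclic group `Lˣ`, that is `(q³ - 1) / (q - 1) = q² + q + 1`.
-/

open Polynomial Matrix

theorem orderOf_mk_eq_orderOf_mk_of_pow_mem_iff {G H : Type*} [Group G] [Group H]
    {N : Subgroup G} [N.Normal] {M : Subgroup H} [M.Normal] {g : G} {h : H}
    (hgh : ∀ n : ℕ, g ^ n ∈ N ↔ h ^ n ∈ M) :
    orderOf (g : G ⧸ N) = orderOf (h : H ⧸ M) :=
  orderOf_eq_orderOf_iff.mpr fun n => by
    rw [← QuotientGroup.mk_pow, ← QuotientGroup.mk_pow, QuotientGroup.eq_one_iff,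
      QuotientGroup.eq_one_iff, hgh]

theorem orderOf_mk_mul_card_eq_card {G : Type*} [Group G] [Finite G] {g : G}
    (hg : orderOf g = Nat.card G) (H : Subgroup G) [H.Normal] :
    orderOf (g : G ⧸ H) * Nat.card H = Nat.card G := by
  have hgen (x : G) : x ∈ Subgroup.zpowers g := by
    rw [(Subgroup.zpowers g).eq_top_of_card_eq (by rw [Nat.card_zpowers, hg])]
    trivial
  rw [orderOf_eq_card_of_forall_mem_zpowers, ← Subgroup.index, H.index_mul_card]
  intro y
  obtain ⟨x, rfl⟩ := QuotientGroup.mk_surjective y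
  obtain ⟨k, rfl⟩ := Subgroup.mem_zpowers_iff.mp (hgen x)
  exact ⟨k, rfl⟩

theorem Units.mem_range_map_algebraMap_iff {K L : Type*} [Field K] [DivisionRing L]
    [Algebra K L] (x : Lˣ) :
    x ∈ (Units.map (algebraMap K L : K →* L)).range ↔ (x : L) ∈ Set.range (algebraMap K L) := by
  constructor
  · rintro ⟨k, rfl⟩
    exact ⟨k, rfl⟩
  · rintro ⟨k, hk⟩
    have hk0 : k ≠ 0 := by
      rintro rfl
      exact x.ne_zero (by simp [← hk])
    exact ⟨Units.mk0 k hk0, Units.ext hk⟩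

theorem FiniteField.orderOf_mk_mul_card_sub_one (K : Type*) {L : Type*} [Field K] [Field L]
    [Finite L] [Algebra K L] {ω : Lˣ} (hω : orderOf ω = Nat.card L - 1) :
    orderOf (ω : Lˣ ⧸ (Units.map (algebraMap K L : K →* L)).range) * (Nat.card K - 1) =
      Nat.card L - 1 := by
  have hinj : Function.Injective (Units.map (algebraMap K L : K →* L)) :=
    Units.map_injective (algebraMap K L).injective
  rw [← Nat.card_units, ← Nat.card_units, Nat.card_congr (MonoidHom.ofInjective hinj).toEquiv]
  exact orderOf_mk_mul_card_eq_card (by rwa [Nat.card_units]) _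

theorem Algebra.leftMulMatrix_mem_range_scalar_iff {R S ι : Type*} [CommRing R] [Ring S]
    [Algebra R S] [Fintype ι] [DecidableEq ι] (b : Module.Basis ι R S) (x : S) :
    leftMulMatrix b x ∈ Set.range (scalar ι) ↔ x ∈ Set.range (algebraMap R S) := by
  have hscalar (r : R) : leftMulMatrix b (algebraMap R S r) = scalar ι r := by
    rw [AlgHom.commutes, algebraMap_eq_diagonal]
    rfl
  simp only [Set.mem_range, ← hscalar, (leftMulMatrix_injective b).eq_iff]

theorem Matrix.transpose_mem_range_scalar_iff {n α : Type*} [DecidableEq n] [Fintype n]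
    [Semiring α] {A : Matrix n n α} :
    Aᵀ ∈ Set.range (scalar n) ↔ A ∈ Set.range (scalar n) := by
  simp only [Set.mem_range, scalar_apply, eq_comm (b := Aᵀ), eq_comm (b := A),
    transpose_eq_diagonal]

section PowerBasis

variable {K L : Type*} [Field K] [Field L] [Algebra K L] [FiniteDimensional K L]

noncomputable def PowerBasis.ofMinpolyNatDegreeEq {x : L} {n : ℕ}
    (hx : (minpoly K x).natDegree = n) (hn : Module.finrank K L = n) : PowerBasis K L where
  gen := x
  dim := n
  basis := basisOfLinearIndependentOfCardEqFinrank' _ (hx ▸ linearIndependent_pow x) (by simp [hn])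
  basis_eq_pow i := by rw [coe_basisOfLinearIndependentOfCardEqFinrank']

theorem exists_basis_leftMulMatrix_eq_transpose {x : L} {a b c : K}
    (hx : minpoly K x = X ^ 3 - C a * X ^ 2 - C b * X - C c) (hn : Module.finrank K L = 3) :
    ∃ B : Module.Basis (Fin 3) K L,
      Algebra.leftMulMatrix B x = !![0, 1, 0; 0, 0, 1; c, b, a]ᵀ := by
  let pb := PowerBasis.ofMinpolyNatDegreeEq (by rw [hx]; compute_degree!) hn
  refine ⟨pb.basis, pb.leftMulMatrix.trans ?_⟩
  ext i j
  simp only [PowerBasis.minpolyGen_eq, of_apply]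
  fin_cases i <;> fin_cases j <;> simp [pb, PowerBasis.ofMinpolyNatDegreeEq, hx, coeff_X, coeff_C]

end PowerBasis

/-- Let `K ⊆ L` be finite fields with `|K| = q`, `|L| = q³`, let `ω` be a
primitive element of `L` with minimal polynomial `x³ − a x² − b x − c` over `K`. Then the
companion-type matrix `C = [[0,1,0],[0,0,1],[c,b,a]]` is invertible and its image in
`PGL(3, K)` has order exactly `q² + q + 1` (it induces a Singer cycle of `PG(2, q)`). -/
theorem singer_matrix_order (q : ℕ) (K L : Type*) [Field K] [Field L] [Fintype K] [Fintype L]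
    [Algebra K L] (hK : Fintype.card K = q) (hL : Fintype.card L = q ^ 3)
    (ω : Lˣ) (hω : orderOf ω = q ^ 3 - 1) (a b c : K)
    (hmin : minpoly K (ω : L) = X ^ 3 - C a * X ^ 2 - C b * X - C c) :
    ∃ u : Matrix.GeneralLinearGroup (Fin 3) K,
      (u : Matrix (Fin 3) (Fin 3) K) = !![0, 1, 0; 0, 0, 1; c, b, a] ∧
      orderOf (QuotientGroup.mk u : Matrix.GeneralLinearGroup (Fin 3) K ⧸
        Subgroup.center (Matrix.GeneralLinearGroup (Fin 3) K)) = q ^ 2 + q + 1 := by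
  have hq : 1 < q := hK ▸ Fintype.one_lt_card
  have hfinrank : Module.finrank K L = 3 := by
    have h := Module.card_eq_pow_finrank (K := K) (V := L)
    rw [hK, hL] at h
    exact (Nat.pow_right_injective hq h).symm
  obtain ⟨B, hmul⟩ := exists_basis_leftMulMatrix_eq_transpose hmin hfinrank
  have hc : c ≠ 0 := by
    simpa [hmin, coeff_X, coeff_C] using
      minpoly.coeff_zero_ne_zero (IsIntegral.of_finite K (ω : L)) ω.ne_zero
  let u : GL (Fin 3) K := .mkOfDetNeZero !![0, 1, 0; 0, 0, 1; c, b, a] (by simpa [det_fin_three])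
  refine ⟨u, rfl, ?_⟩
  have hcenter (n : ℕ) : u ^ n ∈ Subgroup.center (GL (Fin 3) K) ↔
      ω ^ n ∈ (Units.map (algebraMap K L : K →* L)).range := by
    rw [GeneralLinearGroup.mem_center_iff_val_mem_range_scalar, Units.val_pow_eq_pow_val,
      ← transpose_mem_range_scalar_iff, transpose_pow, GeneralLinearGroup.val_mkOfDetNeZero,
      ← hmul, ← map_pow, Algebra.leftMulMatrix_mem_range_scalar_iff,
      Units.mem_range_map_algebraMap_iff, Units.val_pow_eq_pow_val]
  rw [orderOf_mk_eq_orderOf_mk_of_pow_mem_iff hcenter]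
  have hquot := FiniteField.orderOf_mk_mul_card_sub_one K (ω := ω)
    (by rwa [Nat.card_eq_fintype_card, hL])
  rw [Nat.card_eq_fintype_card, Nat.card_eq_fintype_card, hK, hL] at hquot
  refine Nat.eq_of_mul_eq_mul_right (Nat.sub_pos_of_lt hq) (hquot.trans ?_)
  have hq3 : 1 ≤ q ^ 3 := Nat.one_le_pow _ _ (by omega)
  zify [hq.le, hq3]
  ring
end

section
/- Let q and k be natural numbers with k ∣ q² + q + 1 and k ≤ q + 2; set t = q − k + 2 and n = 2t. Let L be a field and b ∈ Lˣ an element of multiplicative order exactly k. Let G be a homogeneous polynomial of degree n in L[X₀, X₁, X₂] which is β-invariant (there is a nonzero λ ∈ L with G(bX₀, b^{q+1}X₁, X₂) = λ·G(X₀, X₁, X₂)), and assume the coefficient of X₁² X₂^{n−2} in G is nonzero. Then for every pair (l, m) with 0 ≤ l ≤ m ≤ n such that the coefficient of X₀^l X₁^{m−l} X₂^{n−m} in G is nonzero, one has m ≡ (q+1)·l + 2 (mod k); equivalently, since t ≡ q + 2 (mod k), m ≡ (t−1)·l + 2 (mod k). -/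
/-!
The substitution `Xᵢ ↦ cᵢ Xᵢ` multiplies the coefficient of `X^d` by `∏ cᵢ^{dᵢ}`, so β-invariance
forces `b^l (b^{q+1})^{m-l} = λ` for every nonzero term, and the term `X₁² X₂^{n-2}` gives
`λ = (b^{q+1})²`. Comparing exponents modulo `k = orderOf b` yields
`l + (q+1)(m-l) ≡ 2(q+1)`, and since `q(q+1) ≡ -1 (mod k)`, multiplying by `-q` solves for `m`.
-/

open MvPolynomial

theorem MvPolynomial.coeff_aeval_C_mul_X {σ R : Type*} [Fintype σ] [CommSemiring R]
    (c : σ → R) (p : MvPolynomial σ R) (d : σ →₀ ℕ) :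
    coeff d (aeval (fun i => C (c i) * X i) p) = (∏ i, c i ^ d i) * coeff d p := by
  induction p using MvPolynomial.induction_on' with
  | add p q hp hq => simp only [map_add, coeff_add, hp, hq, mul_add]
  | monomial u a =>
    have hmon : aeval (fun i => C (c i) * X i) (monomial u a) =
        monomial u ((∏ i, c i ^ u i) * a) := by
      rw [aeval_monomial, Finsupp.prod_fintype _ _ (fun i => pow_zero _)]
      simp only [mul_pow, Finset.prod_mul_distrib, ← C_pow, ← map_prod, algebraMap_eq]
      rw [monomial_eq, Finsupp.prod_fintype _ _ (fun i => pow_zero _), C_mul]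
      ring
    classical
    rw [hmon, coeff_monomial, coeff_monomial]
    split_ifs with h
    · rw [h]
    · rw [mul_zero]

theorem MvPolynomial.prod_pow_eq_of_aeval_C_mul_X_eq {σ K : Type*} [Fintype σ] [Field K]
    {c : σ → K} {lam : K} {p : MvPolynomial σ K}
    (hp : aeval (fun i => C (c i) * X i) p = C lam * p) {d : σ →₀ ℕ} (hd : coeff d p ≠ 0) :
    ∏ i, c i ^ d i = lam := by
  have h := congrArg (coeff d) hp
  rw [coeff_aeval_C_mul_X, coeff_C_mul] at h
  exact mul_right_cancel₀ hd h

theorem modEq_of_add_mul_modEq {q k l m : ℕ} (hdvd : k ∣ q ^ 2 + q + 1) (hlm : l ≤ m)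
    (h : l + (q + 1) * (m - l) ≡ (q + 1) * 2 [MOD k]) : m ≡ (q + 1) * l + 2 [MOD k] := by
  have hq : (q : ZMod k) ^ 2 + q + 1 = 0 := by
    exact_mod_cast (ZMod.natCast_eq_zero_iff _ _).mpr hdvd
  rw [← ZMod.natCast_eq_natCast_iff] at h ⊢
  push_cast [Nat.cast_sub hlm] at h ⊢
  linear_combination (-(q : ZMod k)) * h + ((m : ZMod k) - l - 2) * hq

theorem modEq_of_pow_mul_pow_eq {G : Type*} [LeftCancelMonoid G] {x : G} {q k l m : ℕ}
    (hx : orderOf x = k) (hdvd : k ∣ q ^ 2 + q + 1) (hlm : l ≤ m)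
    (h : x ^ l * (x ^ (q + 1)) ^ (m - l) = (x ^ (q + 1)) ^ 2) :
    m ≡ (q + 1) * l + 2 [MOD k] := by
  refine modEq_of_add_mul_modEq hdvd hlm ?_
  rw [← hx, ← pow_eq_pow_iff_modEq, pow_add, pow_mul, pow_mul, h]

theorem exponent_congruence_general (q k : ℕ) (hdvd : k ∣ q ^ 2 + q + 1)
    (L : Type*) [Field L] (b : Lˣ) (hb : orderOf b = k)
    (G : MvPolynomial (Fin 3) L)
    (lam : L)
    (hbeta : aeval ![C (b : L) * X 0, C ((b : L) ^ (q + 1)) * X 1,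
      (X 2 : MvPolynomial (Fin 3) L)] G = C lam * G)
    (hy2 : coeff (Finsupp.equivFunOnFinite.symm ![0, 2, 2 * (q - k + 2) - 2]) G ≠ 0) :
    ∀ l m, l ≤ m → m ≤ 2 * (q - k + 2) →
      coeff (Finsupp.equivFunOnFinite.symm ![l, m - l, 2 * (q - k + 2) - m]) G ≠ 0 →
      m ≡ (q + 1) * l + 2 [MOD k] := by
  intro l m hlm _ hlm_coeff
  have hdiag : ![C (b : L) * X 0, C ((b : L) ^ (q + 1)) * X 1, (X 2 : MvPolynomial (Fin 3) L)]
      = fun i => C (![(b : L), (b : L) ^ (q + 1), 1] i) * X i := by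
    funext i
    fin_cases i <;> simp
  rw [hdiag] at hbeta
  have hy2_eig := prod_pow_eq_of_aeval_C_mul_X_eq hbeta hy2
  have hlm_eig := prod_pow_eq_of_aeval_C_mul_X_eq hbeta hlm_coeff
  simp only [Fin.prod_univ_three, Finsupp.coe_equivFunOnFinite_symm, Matrix.cons_val, one_pow,
    pow_zero, one_mul, mul_one] at hy2_eig hlm_eig
  refine modEq_of_pow_mul_pow_eq hb hdvd hlm (Units.ext ?_)
  push_cast
  exact hlm_eig.trans hy2_eig.symm

/-- (Lemma: congruence on exponents of nonzero terms.) Let `k ∣ q² + q + 1`,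
`k ≤ q + 2`, `t = q − k + 2`, `n = 2t`, and let `G` be a β-invariant homogeneous polynomial
of degree `n` over `L` (with `b ∈ Lˣ` of order `k`) whose coefficient of `X₁² X₂^{n−2}` is
nonzero. Then every nonzero term `a_{l, m−l} X₀^l X₁^{m−l} X₂^{n−m}` of `G` satisfies
`m ≡ (q+1)·l + 2 (mod k)`. -/
theorem exponent_congruence (q k : ℕ) (hdvd : k ∣ q ^ 2 + q + 1) (hkq : k ≤ q + 2)
    (L : Type*) [Field L] (b : Lˣ) (hb : orderOf b = k)
    (G : MvPolynomial (Fin 3) L)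
    (hhom : G.IsHomogeneous (2 * (q - k + 2)))
    (lam : L) (hlam : lam ≠ 0)
    (hbeta : aeval ![C (b : L) * X 0, C ((b : L) ^ (q + 1)) * X 1,
      (X 2 : MvPolynomial (Fin 3) L)] G = C lam * G)
    (hy2 : coeff (Finsupp.equivFunOnFinite.symm ![0, 2, 2 * (q - k + 2) - 2]) G ≠ 0) :
    ∀ l m, l ≤ m → m ≤ 2 * (q - k + 2) →
      coeff (Finsupp.equivFunOnFinite.symm ![l, m - l, 2 * (q - k + 2) - m]) G ≠ 0 →
      m ≡ (q + 1) * l + 2 [MOD k] :=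
  exponent_congruence_general q k hdvd L b hb G lam hbeta hy2
end

section
/- Let L be a field, t ≥ 3 a natural number, ε₁, ε₂ ∈ L with ε₁³ = 1 and ε₂³ = 1, and c ∈ L. Define g(x, y) = y² + ε₁x²y^{2t−2} + ε₁²x^{2t−2} + c(x^t y^{t−1} + ε₂ x^{t−1} y + ε₂² x y^t). Then for all x, y ∈ L with x ≠ 0, setting x' = y/x^{t−1} and y' = y^{t−1}/x^{t−2}, one has the identity x^{2t−2}·(x'² + ε₁y'² + ε₁² + c·y' + c·ε₂·x' + c·ε₂²·x'·y') = g(x, y). In particular, if (x, y) with x ≠ 0 lies on the curve g = 0, then (x', y') lies on the conic x'² + ε₁y'² + ε₁² + c y' + c ε₂ x' + c ε₂² x' y' = 0 (so the rational transformation Φ: (x,y) ↦ (y/x^{t−1}, y^{t−1}/x^{t−2}) maps the cyclic curve into a conic or a line). -/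
section

variable {L : Type*} [Field L]

def cyclicCurveForm (t : ℕ) (ε₁ ε₂ c x y : L) : L :=
  y ^ 2 + ε₁ * x ^ 2 * y ^ (2 * t - 2) + ε₁ ^ 2 * x ^ (2 * t - 2)
    + c * (x ^ t * y ^ (t - 1) + ε₂ * x ^ (t - 1) * y + ε₂ ^ 2 * x * y ^ t)

def conicForm (ε₁ ε₂ c x' y' : L) : L :=
  x' ^ 2 + ε₁ * y' ^ 2 + ε₁ ^ 2 + c * y' + c * ε₂ * x' + c * ε₂ ^ 2 * x' * y'

/-- Each monomial of the conic in `x' = y / x^(t-1)`, `y' = y^(t-1) / x^(t-2)`, times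
`x^(2t-2)`, is exactly one monomial of the cyclic curve. -/
theorem pow_mul_conicForm_eq_cyclicCurveForm {t : ℕ} (ht : 2 ≤ t) (ε₁ ε₂ c : L) {x : L}
    (hx : x ≠ 0) (y : L) :
    x ^ (2 * t - 2) * conicForm ε₁ ε₂ c (y / x ^ (t - 1)) (y ^ (t - 1) / x ^ (t - 2)) =
      cyclicCurveForm t ε₁ ε₂ c x y := by
  obtain ⟨n, rfl⟩ := Nat.exists_eq_add_of_le' ht
  unfold conicForm cyclicCurveForm
  rw [show 2 * (n + 2) - 2 = 2 * n + 2 by omega, show n + 2 - 1 = n + 1 by omega,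
    Nat.add_sub_cancel]
  field_simp
  ring

end

theorem rational_transformation_to_conic_general (L : Type*) [Field L] (t : ℕ) (ht : 3 ≤ t)
    (ε₁ ε₂ c : L)
    (x y : L) (hx : x ≠ 0) :
    x ^ (2 * t - 2) *
        ((y / x ^ (t - 1)) ^ 2 + ε₁ * (y ^ (t - 1) / x ^ (t - 2)) ^ 2 + ε₁ ^ 2
          + c * (y ^ (t - 1) / x ^ (t - 2)) + c * ε₂ * (y / x ^ (t - 1))
          + c * ε₂ ^ 2 * (y / x ^ (t - 1)) * (y ^ (t - 1) / x ^ (t - 2))) =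
      y ^ 2 + ε₁ * x ^ 2 * y ^ (2 * t - 2) + ε₁ ^ 2 * x ^ (2 * t - 2)
        + c * (x ^ t * y ^ (t - 1) + ε₂ * x ^ (t - 1) * y + ε₂ ^ 2 * x * y ^ t) ∧
    (y ^ 2 + ε₁ * x ^ 2 * y ^ (2 * t - 2) + ε₁ ^ 2 * x ^ (2 * t - 2)
        + c * (x ^ t * y ^ (t - 1) + ε₂ * x ^ (t - 1) * y + ε₂ ^ 2 * x * y ^ t) = 0 →
      (y / x ^ (t - 1)) ^ 2 + ε₁ * (y ^ (t - 1) / x ^ (t - 2)) ^ 2 + ε₁ ^ 2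
          + c * (y ^ (t - 1) / x ^ (t - 2)) + c * ε₂ * (y / x ^ (t - 1))
          + c * ε₂ ^ 2 * (y / x ^ (t - 1)) * (y ^ (t - 1) / x ^ (t - 2)) = 0) := by
  have key := pow_mul_conicForm_eq_cyclicCurveForm (by omega : 2 ≤ t) ε₁ ε₂ c hx y
  exact ⟨key, fun hg => (mul_eq_zero.mp (key.trans hg)).resolve_left (pow_ne_zero _ hx)⟩

/-- (The rational transformation `Φ` maps the cyclic curve to a conic.)
For `g(x,y) = y² + ε₁x²y^{2t−2} + ε₁²x^{2t−2} + c(x^t y^{t−1} + ε₂ x^{t−1} y + ε₂² x y^t)`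
with `ε₁³ = ε₂³ = 1`, and `x ≠ 0`, setting `x' = y/x^{t−1}`, `y' = y^{t−1}/x^{t−2}`, one has
`x^{2t−2}·(x'² + ε₁y'² + ε₁² + c y' + c ε₂ x' + c ε₂² x' y') = g(x,y)`; in particular points
of `g = 0` with `x ≠ 0` map to the conic `x'² + ε₁y'² + ε₁² + c y' + c ε₂ x' + c ε₂² x' y' = 0`. -/
theorem rational_transformation_to_conic (L : Type*) [Field L] (t : ℕ) (ht : 3 ≤ t)
    (ε₁ ε₂ c : L) (hε₁ : ε₁ ^ 3 = 1) (hε₂ : ε₂ ^ 3 = 1)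
    (x y : L) (hx : x ≠ 0) :
    x ^ (2 * t - 2) *
        ((y / x ^ (t - 1)) ^ 2 + ε₁ * (y ^ (t - 1) / x ^ (t - 2)) ^ 2 + ε₁ ^ 2
          + c * (y ^ (t - 1) / x ^ (t - 2)) + c * ε₂ * (y / x ^ (t - 1))
          + c * ε₂ ^ 2 * (y / x ^ (t - 1)) * (y ^ (t - 1) / x ^ (t - 2))) =
      y ^ 2 + ε₁ * x ^ 2 * y ^ (2 * t - 2) + ε₁ ^ 2 * x ^ (2 * t - 2)
        + c * (x ^ t * y ^ (t - 1) + ε₂ * x ^ (t - 1) * y + ε₂ ^ 2 * x * y ^ t) ∧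
    (y ^ 2 + ε₁ * x ^ 2 * y ^ (2 * t - 2) + ε₁ ^ 2 * x ^ (2 * t - 2)
        + c * (x ^ t * y ^ (t - 1) + ε₂ * x ^ (t - 1) * y + ε₂ ^ 2 * x * y ^ t) = 0 →
      (y / x ^ (t - 1)) ^ 2 + ε₁ * (y ^ (t - 1) / x ^ (t - 2)) ^ 2 + ε₁ ^ 2
          + c * (y ^ (t - 1) / x ^ (t - 2)) + c * ε₂ * (y / x ^ (t - 1))
          + c * ε₂ ^ 2 * (y / x ^ (t - 1)) * (y ^ (t - 1) / x ^ (t - 2)) = 0) :=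
  rational_transformation_to_conic_general L t ht ε₁ ε₂ c x y hx
end

section
/- Let L be a field, t ≥ 3 a natural number, ε₁, ε₂ ∈ L with ε₁³ = 1 and ε₂³ = 1, and c ∈ L. Define g(x, y) = y² + ε₁x²y^{2t−2} + ε₁²x^{2t−2} + c(x^t y^{t−1} + ε₂ x^{t−1} y + ε₂² x y^t). Then for every u ∈ L with u^{t²−3t+3} = 1 and for all x, y ∈ L, one has g(u·x, u^{t−1}·y) = u^{2t−2}·g(x, y). In particular, the linear collineation η: (x₁, x₂, x₃) ↦ (ux₁, u^{t−1}x₂, x₃) preserves the curve g = 0. -/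
/-!
Put `s = t - 1`. Since `t² - 3t + 3 = s² - s + 1`, the hypothesis on `u` says exactly that
`v = u ^ s` satisfies `u * v ^ s = v`. Under `(x, y) ↦ (u x, v y)` each monomial of `g` is then
multiplied by `v²`: for instance `x² y^{2s}` picks up `(u v^s)² = v²` and `x^{s+1} y^s` picks up
`u^s (u v^s) = v²`.
-/

/-- The curve's `g`, indexed by `s = t - 1` so that no exponent involves truncated subtraction. -/
def cyclicCurveEq {R : Type*} [CommRing R] (s : ℕ) (ε₁ ε₂ c x y : R) : R :=
  y ^ 2 + ε₁ * x ^ 2 * y ^ (2 * s) + ε₁ ^ 2 * x ^ (2 * s)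
    + c * (x ^ (s + 1) * y ^ s + ε₂ * x ^ s * y + ε₂ ^ 2 * x * y ^ (s + 1))

theorem cyclicCurveEq_mul_mul_pow {R : Type*} [CommRing R] {s : ℕ} {u : R}
    (hu : u * (u ^ s) ^ s = u ^ s) (ε₁ ε₂ c x y : R) :
    cyclicCurveEq s ε₁ ε₂ c (u * x) (u ^ s * y) = u ^ (2 * s) * cyclicCurveEq s ε₁ ε₂ c x y := by
  unfold cyclicCurveEq
  linear_combination (ε₁ * x ^ 2 * y ^ (2 * s) * (u * (u ^ s) ^ s + u ^ s)
    + c * x ^ (s + 1) * y ^ s * u ^ s + c * ε₂ ^ 2 * x * y ^ (s + 1) * u ^ s) * hu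

theorem pow_mul_pow_pow_eq_of_pow_eq_one {M : Type*} [Monoid M] {s N : ℕ} {u : M}
    (hN : s * s + 1 = s + N) (hu : u ^ N = 1) : u * (u ^ s) ^ s = u ^ s := by
  rw [← pow_mul, ← pow_succ', hN, pow_add, hu, mul_one]

theorem eta_preserves_cyclic_curve_general (L : Type*) [Field L] (t : ℕ) (ht : 3 ≤ t)
    (ε₁ ε₂ c : L) (u : L) (hu : u ^ (t ^ 2 - 3 * t + 3) = 1) (x y : L) :
    (u ^ (t - 1) * y) ^ 2 + ε₁ * (u * x) ^ 2 * (u ^ (t - 1) * y) ^ (2 * t - 2)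
        + ε₁ ^ 2 * (u * x) ^ (2 * t - 2)
        + c * ((u * x) ^ t * (u ^ (t - 1) * y) ^ (t - 1)
          + ε₂ * (u * x) ^ (t - 1) * (u ^ (t - 1) * y)
          + ε₂ ^ 2 * (u * x) * (u ^ (t - 1) * y) ^ t) =
      u ^ (2 * t - 2) *
        (y ^ 2 + ε₁ * x ^ 2 * y ^ (2 * t - 2) + ε₁ ^ 2 * x ^ (2 * t - 2)
          + c * (x ^ t * y ^ (t - 1) + ε₂ * x ^ (t - 1) * y + ε₂ ^ 2 * x * y ^ t)) := by
  obtain ⟨s, rfl⟩ : ∃ s, t = s + 1 := ⟨t - 1, by omega⟩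
  have hN : s * s + 1 = s + ((s + 1) ^ 2 - 3 * (s + 1) + 3) := by
    have : 3 * (s + 1) ≤ (s + 1) ^ 2 := by nlinarith
    zify [this]
    ring
  have h2s : 2 * (s + 1) - 2 = 2 * s := by omega
  rw [Nat.add_sub_cancel, h2s]
  exact cyclicCurveEq_mul_mul_pow (pow_mul_pow_pow_eq_of_pow_eq_one hN hu) ε₁ ε₂ c x y

/-- (Lemma: the collineation `η` preserves the cyclic curve.) For
`g(x,y) = y² + ε₁x²y^{2t−2} + ε₁²x^{2t−2} + c(x^t y^{t−1} + ε₂ x^{t−1} y + ε₂² x y^t)` with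
`ε₁³ = ε₂³ = 1`, and any `u` with `u^{t²−3t+3} = 1`, one has
`g(u·x, u^{t−1}·y) = u^{2t−2}·g(x,y)` for all `x, y`. -/
theorem eta_preserves_cyclic_curve (L : Type*) [Field L] (t : ℕ) (ht : 3 ≤ t)
    (ε₁ ε₂ c : L) (hε₁ : ε₁ ^ 3 = 1) (hε₂ : ε₂ ^ 3 = 1)
    (u : L) (hu : u ^ (t ^ 2 - 3 * t + 3) = 1) (x y : L) :
    (u ^ (t - 1) * y) ^ 2 + ε₁ * (u * x) ^ 2 * (u ^ (t - 1) * y) ^ (2 * t - 2)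
        + ε₁ ^ 2 * (u * x) ^ (2 * t - 2)
        + c * ((u * x) ^ t * (u ^ (t - 1) * y) ^ (t - 1)
          + ε₂ * (u * x) ^ (t - 1) * (u ^ (t - 1) * y)
          + ε₂ ^ 2 * (u * x) * (u ^ (t - 1) * y) ^ t) =
      u ^ (2 * t - 2) *
        (y ^ 2 + ε₁ * x ^ 2 * y ^ (2 * t - 2) + ε₁ ^ 2 * x ^ (2 * t - 2)
          + c * (x ^ t * y ^ (t - 1) + ε₂ * x ^ (t - 1) * y + ε₂ ^ 2 * x * y ^ t)) :=
  eta_preserves_cyclic_curve_general L t ht ε₁ ε₂ c u hu x y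
end
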